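/- Let D, M ∈ ℝ^{s×s} and t_L, t_R ∈ ℝ^s, where M is symmetric positive definite, M·D + (M·D)ᵀ = t_R·t_Rᵀ − t_L·t_Lᵀ, D·𝟙 = 0 and t_Lᵀ·𝟙 = 1. Let o ∈ ℝ^s be nonzero with Dᵀ·M·o = 0, let F = I − o·(M·o)ᵀ/(oᵀ·M·o), and let X ∈ ℝ^{s×s} satisfy D·X = F and t_Lᵀ·X = 0. Let λ ∈ ℂ with Re λ ≤ 0, u₀ ∈ ℂ, and suppose u ∈ ℂ^s satisfies (with all real data complexified entrywise) the SBP projection scheme u = u₀·𝟙 + λ·X·u. Then |t_Rᵀ·u| ≤ |u₀|; that is, the new SBP projection time integration scheme is A stable. -/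

import Mathlib

/-!
The energy method. Multiplying the scheme by `D` gives `D u = λ F u`, and multiplying by `t_Lᵀ`
gives `t_Lᵀ u = u₀`. Testing the SBP property with `u` yields
`|t_Rᵀ u|² - |t_Lᵀ u|² = 2 Re (u* M D u) = 2 Re λ · u* M F u`. Since `F` is the `M`-orthogonal
projection onto the `M`-complement of `o` (idempotent with `M F` symmetric), `M F = Fᵀ M F` is
positive semidefinite, so the right-hand side is `≤ 0` whenever `Re λ ≤ 0`.
-/

open Matrix

variable {n : Type*} [Fintype n]

theorem isIdempotentElem_one_sub_inv_smul_vecMulVec {K : Type*} [Field K] [DecidableEq n]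
    (v w : n → K) : IsIdempotentElem (1 - (v ⬝ᵥ w)⁻¹ • vecMulVec v w) := by
  have hP : vecMulVec v w * vecMulVec v w = (v ⬝ᵥ w) • vecMulVec v w := by
    rw [vecMulVec_mul_vecMulVec, dotProduct_comm, vecMulVec_smul]
  -- valid also when `v ⬝ᵥ w = 0`, since `0⁻¹ = 0`
  have hc : (v ⬝ᵥ w)⁻¹ * (v ⬝ᵥ w)⁻¹ * (v ⬝ᵥ w) = (v ⬝ᵥ w)⁻¹ := by
    rw [mul_right_comm]
    simpa using mul_inv_mul_cancel (v ⬝ᵥ w)⁻¹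
  unfold IsIdempotentElem
  rw [sub_mul, mul_sub, mul_sub, one_mul, mul_one, one_mul, smul_mul_smul_comm, hP, smul_smul, hc,
    sub_self, sub_zero]

theorem transpose_mul_one_sub_smul_vecMulVec {R : Type*} [CommRing R] [DecidableEq n]
    {M : Matrix n n R} (hM : Mᵀ = M) (c : R) (v : n → R) :
    (M * (1 - c • vecMulVec v (M *ᵥ v)))ᵀ = M * (1 - c • vecMulVec v (M *ᵥ v)) := by
  rw [mul_sub, mul_one, Matrix.mul_smul, mul_vecMulVec]
  simp [hM]

theorem Matrix.PosSemidef.mul_of_isIdempotentElem {R : Type*} [Ring R] [PartialOrder R]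
    [StarRing R] {M F : Matrix n n R} (hM : M.PosSemidef) (hF : IsIdempotentElem F)
    (hMF : (M * F)ᴴ = M * F) : (M * F).PosSemidef := by
  have hFMF : Fᴴ * M * F = M * F := by
    rw [← hM.isHermitian.eq, ← conjTranspose_mul, hM.isHermitian.eq, hMF, Matrix.mul_assoc,
      hF.eq]
  simpa [hFMF] using hM.conjTranspose_mul_mul_same F

theorem Matrix.PosSemidef.mul_one_sub_inv_smul_vecMulVec {K : Type*} [Field K] [PartialOrder K]
    [StarRing K] [TrivialStar K] [DecidableEq n] {M : Matrix n n K} (hM : M.PosSemidef)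
    (o : n → K) : (M * (1 - (o ⬝ᵥ (M *ᵥ o))⁻¹ • vecMulVec o (M *ᵥ o))).PosSemidef := by
  have hMsymm : Mᵀ = M := by simpa using hM.isHermitian.eq
  refine hM.mul_of_isIdempotentElem (isIdempotentElem_one_sub_inv_smul_vecMulVec o _) ?_
  simpa using transpose_mul_one_sub_smul_vecMulVec hMsymm _ o

section Complexification

variable {m : Type*}

open scoped ComplexOrder in
theorem Matrix.PosSemidef.map_ofReal {A : Matrix n n ℝ} (hA : A.PosSemidef) :
    (A.map Complex.ofReal).PosSemidef := by
  have hH : (A.map Complex.ofReal).IsHermitian :=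
    hA.isHermitian.map _ fun x => (Complex.conj_ofReal x).symm
  refine .of_dotProduct_mulVec_nonneg hH fun x => Complex.nonneg_iff.mpr ⟨?_, ?_⟩
  · have hre : (star x ⬝ᵥ (A.map Complex.ofReal *ᵥ x)).re =
        (fun i => (x i).re) ⬝ᵥ (A *ᵥ fun i => (x i).re) +
          (fun i => (x i).im) ⬝ᵥ (A *ᵥ fun i => (x i).im) := by
      simp [dotProduct, mulVec, Complex.mul_re, Finset.mul_sum, ← Finset.sum_add_distrib]
    rw [hre]
    exact add_nonneg (by simpa using hA.dotProduct_mulVec_nonneg _)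
      (by simpa using hA.dotProduct_mulVec_nonneg _)
  · exact (hH.im_star_dotProduct_mulVec_self x).symm

theorem map_ofReal_mulVec (A : Matrix m n ℝ) (v : n → ℝ) :
    A.map Complex.ofReal *ᵥ (fun i => (v i : ℂ)) = fun i => ((A *ᵥ v) i : ℂ) :=
  funext fun i => (RingHom.map_mulVec Complex.ofRealHom A v i).symm

theorem ofReal_vecMul_map (v : n → ℝ) (A : Matrix n m ℝ) :
    (fun i => (v i : ℂ)) ᵥ* A.map Complex.ofReal = fun i => ((v ᵥ* A) i : ℂ) :=
  funext fun i => (RingHom.map_vecMul Complex.ofRealHom A v i).symm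

theorem ofReal_dotProduct (v w : n → ℝ) :
    (fun i => (v i : ℂ)) ⬝ᵥ (fun i => (w i : ℂ)) = ((v ⬝ᵥ w : ℝ) : ℂ) :=
  (RingHom.map_dotProduct Complex.ofRealHom v w).symm

theorem map_ofReal_mul (A : Matrix m n ℝ) (B : Matrix n m ℝ) :
    (A * B).map Complex.ofReal = A.map Complex.ofReal * B.map Complex.ofReal :=
  Matrix.map_mul (f := Complex.ofRealHom)

omit [Fintype n] in
theorem map_ofReal_transpose (A : Matrix m n ℝ) :
    Aᵀ.map Complex.ofReal = (A.map Complex.ofReal)ᴴ := by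
  rw [← conjTranspose_eq_transpose_of_trivial]
  exact conjTranspose_map _ fun x => (Complex.conj_ofReal x).symm

omit [Fintype n] in
theorem map_ofReal_vecMulVec (v w : n → ℝ) :
    (vecMulVec v w).map Complex.ofReal =
      vecMulVec (star fun i => (v i : ℂ)) fun i => (w i : ℂ) := by
  ext i j
  simp [vecMulVec_apply]

end Complexification

section Energy

variable {𝕜 : Type*} [RCLike 𝕜]

theorem re_star_dotProduct_add_conjTranspose_mulVec (B : Matrix n n 𝕜) (u : n → 𝕜) :
    RCLike.re (star u ⬝ᵥ ((B + Bᴴ) *ᵥ u)) = 2 * RCLike.re (star u ⬝ᵥ (B *ᵥ u)) := by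
  have hstar : star u ⬝ᵥ (Bᴴ *ᵥ u) = star (star u ⬝ᵥ (B *ᵥ u)) := by
    rw [star_dotProduct, star_mulVec, conjTranspose_conjTranspose, ← dotProduct_mulVec]
  rw [add_mulVec, dotProduct_add, hstar, map_add, RCLike.star_def, RCLike.conj_re, two_mul]

theorem star_dotProduct_vecMulVec_star_mulVec (a u : n → 𝕜) :
    star u ⬝ᵥ (vecMulVec (star a) a *ᵥ u) = (‖a ⬝ᵥ u‖ ^ 2 : ℝ) := by
  rw [vecMulVec_mulVec, op_smul_eq_smul, dotProduct_smul, star_dotProduct_star, smul_eq_mul,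
    RCLike.star_def, RCLike.mul_conj]
  norm_cast

open scoped ComplexOrder in
theorem norm_dotProduct_le_of_sbp {M D F : Matrix n n 𝕜} {tL tR u : n → 𝕜} {lam : 𝕜}
    (hMF : (M * F).PosSemidef)
    (hSBP : M * D + (M * D)ᴴ = vecMulVec (star tR) tR - vecMulVec (star tL) tL)
    (hlam : RCLike.re lam ≤ 0) (hDu : D *ᵥ u = lam • (F *ᵥ u)) :
    ‖tR ⬝ᵥ u‖ ≤ ‖tL ⬝ᵥ u‖ := by
  obtain ⟨r, hr, hr_eq⟩ := RCLike.nonneg_iff_exists_ofReal.mp (hMF.dotProduct_mulVec_nonneg u)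
  have hMD : star u ⬝ᵥ ((M * D) *ᵥ u) = lam * r := by
    rw [← mulVec_mulVec, hDu, mulVec_smul, dotProduct_smul, mulVec_mulVec, hr_eq, smul_eq_mul]
  have henergy : ‖tR ⬝ᵥ u‖ ^ 2 - ‖tL ⬝ᵥ u‖ ^ 2 = 2 * (RCLike.re lam * r) := by
    have h := congrArg (fun A => RCLike.re (star u ⬝ᵥ (A *ᵥ u))) hSBP
    simp only [re_star_dotProduct_add_conjTranspose_mulVec, hMD, sub_mulVec, dotProduct_sub,
      star_dotProduct_vecMulVec_star_mulVec, map_sub, RCLike.ofReal_re,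
      RCLike.re_mul_ofReal] at h
    linarith
  have hsq : ‖tR ⬝ᵥ u‖ ^ 2 ≤ ‖tL ⬝ᵥ u‖ ^ 2 := by
    nlinarith [mul_nonpos_of_nonpos_of_nonneg hlam hr]
  exact (pow_le_pow_iff_left₀ (norm_nonneg _) (norm_nonneg _) two_ne_zero).mp hsq

end Energy

section Scheme

variable {R : Type*} [CommRing R] {X D F : Matrix n n R} {tL u : n → R} {u₀ lam : R}

theorem mulVec_eq_smul_mulVec_of_scheme (hu : u = u₀ • 1 + lam • (X *ᵥ u))
    (hD1 : D *ᵥ 1 = 0) (hX : D * X = F) : D *ᵥ u = lam • (F *ᵥ u) := by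
  conv_lhs => rw [hu]
  rw [mulVec_add, mulVec_smul, mulVec_smul, hD1, mulVec_mulVec, hX, smul_zero, zero_add]

theorem dotProduct_eq_of_scheme (hu : u = u₀ • 1 + lam • (X *ᵥ u))
    (htL1 : tL ⬝ᵥ 1 = 1) (hXL : tL ᵥ* X = 0) : tL ⬝ᵥ u = u₀ := by
  rw [hu, dotProduct_add, dotProduct_smul, dotProduct_smul, dotProduct_mulVec, hXL, htL1,
    zero_dotProduct, smul_zero, add_zero, smul_eq_mul, mul_one]

end Scheme

theorem sbp_projection_A_stable_general
    {s : ℕ}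
    (D M : Matrix (Fin s) (Fin s) ℝ) (tL tR : Fin s → ℝ)
    (hM : M.PosDef)
    (hSBP : M * D + (M * D)ᵀ = vecMulVec tR tR - vecMulVec tL tL)
    (hD1 : D *ᵥ (1 : Fin s → ℝ) = 0)
    (htL1 : tL ⬝ᵥ (1 : Fin s → ℝ) = 1)
    (o : Fin s → ℝ)
    (F : Matrix (Fin s) (Fin s) ℝ)
    (hF : F = 1 - (o ⬝ᵥ (M *ᵥ o))⁻¹ • vecMulVec o (M *ᵥ o))
    (X : Matrix (Fin s) (Fin s) ℝ)
    (hX : D * X = F) (hXL : tL ᵥ* X = 0)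
    (lam : ℂ) (hlam : lam.re ≤ 0) (u₀ : ℂ) (u : Fin s → ℂ)
    (hu : u = u₀ • (1 : Fin s → ℂ) + lam • ((X.map Complex.ofReal) *ᵥ u)) :
    ‖(fun i => (tR i : ℂ)) ⬝ᵥ u‖ ≤ ‖u₀‖ := by
  have hMF : (M * F).PosSemidef := hF ▸ hM.posSemidef.mul_one_sub_inv_smul_vecMulVec o
  have hSBPc := congrArg (Matrix.map · Complex.ofReal) hSBP
  simp only [Matrix.map_add _ Complex.ofReal_add, Matrix.map_sub _ Complex.ofReal_sub,
    map_ofReal_mul, map_ofReal_transpose, map_ofReal_vecMulVec] at hSBPc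
  have hD1c : D.map Complex.ofReal *ᵥ 1 = 0 := by
    simpa [hD1, ← Pi.one_def, ← Pi.zero_def] using map_ofReal_mulVec D 1
  have htL1c : (fun i => (tL i : ℂ)) ⬝ᵥ 1 = 1 := by
    simpa [htL1, ← Pi.one_def] using ofReal_dotProduct tL 1
  have hXLc : (fun i => (tL i : ℂ)) ᵥ* X.map Complex.ofReal = 0 := by
    simpa [hXL, ← Pi.zero_def] using ofReal_vecMul_map tL X
  have hXc : D.map Complex.ofReal * X.map Complex.ofReal = F.map Complex.ofReal := by
    rw [← map_ofReal_mul, hX]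
  calc ‖(fun i => (tR i : ℂ)) ⬝ᵥ u‖ ≤ ‖(fun i => (tL i : ℂ)) ⬝ᵥ u‖ :=
        norm_dotProduct_le_of_sbp (by simpa [map_ofReal_mul] using hMF.map_ofReal) hSBPc hlam
          (mulVec_eq_smul_mulVec_of_scheme hu hD1c hXc)
    _ = ‖u₀‖ := by rw [dotProduct_eq_of_scheme hu htL1c hXLc]

/-- A stability of the new SBP projection scheme. With the SBP
property, consistency, grid-oscillation vector `o`, filter `F`, and matrix
representation `X` of `J F` (`D X = F`, `t_Lᵀ X = 0`), if `Re λ ≤ 0` and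
`u ∈ ℂ^s` satisfies `u = u₀ 𝟙 + λ X u`, then `|t_Rᵀ u| ≤ |u₀|`. -/
theorem sbp_projection_A_stable
    {s : ℕ} (hs : 1 ≤ s)
    (D M : Matrix (Fin s) (Fin s) ℝ) (tL tR : Fin s → ℝ)
    (hM : M.PosDef)
    (hSBP : M * D + (M * D)ᵀ = vecMulVec tR tR - vecMulVec tL tL)
    (hD1 : D *ᵥ (1 : Fin s → ℝ) = 0)
    (htL1 : tL ⬝ᵥ (1 : Fin s → ℝ) = 1)
    (o : Fin s → ℝ) (ho : o ≠ 0) (hoD : Dᵀ *ᵥ (M *ᵥ o) = 0)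
    (F : Matrix (Fin s) (Fin s) ℝ)
    (hF : F = 1 - (o ⬝ᵥ (M *ᵥ o))⁻¹ • vecMulVec o (M *ᵥ o))
    (X : Matrix (Fin s) (Fin s) ℝ)
    (hX : D * X = F) (hXL : tL ᵥ* X = 0)
    (lam : ℂ) (hlam : lam.re ≤ 0) (u₀ : ℂ) (u : Fin s → ℂ)
    (hu : u = u₀ • (1 : Fin s → ℂ) + lam • ((X.map Complex.ofReal) *ᵥ u)) :
    ‖(fun i => (tR i : ℂ)) ⬝ᵥ u‖ ≤ ‖u₀‖ :=
  sbp_projection_A_stable_general D M tL tR hM hSBP hD1 htL1 o F hF X hX hXL lam hlam u₀ u hu
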